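/- In the exponential example, the number of PAXp's (for δ = 1, class True, point v) is at least 2^m; hence the disjunction PAXpred over all PAXp's has size exponential in the number n = 2m+1 of features. -/

import Mathlib

open Finset

/-- The feature space of the exponential example with `n = 2m+1` features: the first
`2m` features have domain `{0,1}` and the last feature has domain `{0,1,n}`, encoded
as functions into `Fin 3` (with the value `2` of the last feature encoding `n`)
whose first `2m` coordinates are `< 2`. -/
abbrev ExpF (m : ℕ) :=
  {x : Fin (2 * m + 1) → Fin 3 // ∀ i : Fin (2 * m + 1), (i : ℕ) < 2 * m → (x i : ℕ) < 2}

/-- The classifier of the exponential example: `x` is classified `true` iff at least `m`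
of its first `2m` features have value `1` (i.e. the goal is reachable in one step). -/
def expκ (m : ℕ) (x : ExpF m) : Bool :=
  decide (m ≤ (Finset.univ.filter
    (fun i : Fin (2 * m + 1) => (i : ℕ) < 2 * m ∧ x.1 i = 1)).card)

/-- The specific point `v = (1,…,1,0)` of the exponential example. -/
def expv (m : ℕ) : ExpF m :=
  ⟨fun i => if (i : ℕ) < 2 * m then 1 else 0, by
    intro i h
    simp only [if_pos h]
    decide⟩

/-- `Prop(X)` in the exponential example: the proportion, among points agreeing with
`v` on `X`, of points classified `true`. -/
noncomputable def expProp (m : ℕ) (X : Finset (Fin (2 * m + 1))) : ℝ :=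
  ((Finset.univ.filter
      (fun x : ExpF m => (∀ i ∈ X, x.1 i = (expv m).1 i) ∧ expκ m x = true)).card : ℝ) /
  ((Finset.univ.filter (fun x : ExpF m => ∀ i ∈ X, x.1 i = (expv m).1 i)).card : ℝ)

/-- `X` is a weak PAXp (for threshold `δ = 1`, class `true`, point `v`) in the
exponential example. -/
def ExpIsWeakPAXp (m : ℕ) (X : Finset (Fin (2 * m + 1))) : Prop :=
  1 ≤ expProp m X

/-- `X` is a PAXp (subset-minimal weak PAXp) in the exponential example. -/
def ExpIsPAXp (m : ℕ) (X : Finset (Fin (2 * m + 1))) : Prop :=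
  ExpIsWeakPAXp m X ∧ ∀ Y ⊂ X, ¬ ExpIsWeakPAXp m Y

/-!
A set `X` of features is a weak PAXp iff it fixes at least `m` of the `2m` binary features:
among the points agreeing with `v` on `X`, the one that is `0` off `X` has the fewest ones.
Hence every `m`-subset of the binary features is a PAXp, and there are
`centralBinom m ≥ 2 ^ m` of them.
-/

theorem one_le_card_filter_div_card_iff {α K : Type*} [Field K] [LinearOrder K]
    [IsStrictOrderedRing K] {s : Finset α} (hs : s.Nonempty) {p : α → Prop} [DecidablePred p] :
    1 ≤ (#(s.filter p) : K) / #s ↔ ∀ x ∈ s, p x := by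
  rw [one_le_div (by exact_mod_cast hs.card_pos), Nat.cast_le, ← card_filter_eq_iff]
  exact ⟨(card_filter_le _ _).antisymm, ge_of_eq⟩

theorem two_pow_le_centralBinom (n : ℕ) : 2 ^ n ≤ n.centralBinom := by
  induction n with
  | zero => simp
  | succ n ih =>
    have h := Nat.succ_mul_centralBinom_succ n
    have : (n + 1) * (2 * n.centralBinom) ≤ (n + 1) * (n + 1).centralBinom := by
      rw [h]; nlinarith [n.centralBinom_pos]
    calc 2 ^ (n + 1) ≤ 2 * n.centralBinom := by rw [pow_succ']; omega
      _ ≤ (n + 1).centralBinom := Nat.le_of_mul_le_mul_left this n.succ_pos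

section ExpExample

variable {m : ℕ} {X : Finset (Fin (2 * m + 1))}

theorem expIsWeakPAXp_iff_forall :
    ExpIsWeakPAXp m X ↔
      ∀ x : ExpF m, (∀ i ∈ X, x.1 i = (expv m).1 i) → expκ m x = true := by
  rw [ExpIsWeakPAXp, expProp, ← filter_filter,
    one_le_card_filter_div_card_iff ⟨expv m, by simp⟩]
  simp

def expIndicator (m : ℕ) (X : Finset (Fin (2 * m + 1))) : ExpF m :=
  ⟨fun i => if i ∈ X ∧ (i : ℕ) < 2 * m then 1 else 0,
    fun i _ => by dsimp only; split_ifs <;> decide⟩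

theorem expIndicator_eq_expv (X : Finset (Fin (2 * m + 1))) :
    ∀ i ∈ X, (expIndicator m X).1 i = (expv m).1 i := by
  intro i hi
  by_cases h : (i : ℕ) < 2 * m <;> simp [expIndicator, expv, hi, h]

theorem expκ_expIndicator :
    expκ m (expIndicator m X) =
      decide (m ≤ #(X.filter fun i : Fin (2 * m + 1) => (i : ℕ) < 2 * m)) := by
  rw [expκ]
  congr 3
  ext i
  by_cases h : i ∈ X ∧ (i : ℕ) < 2 * m <;> simp_all [expIndicator]

theorem filter_subset_of_eq_expv {x : ExpF m} (hx : ∀ i ∈ X, x.1 i = (expv m).1 i) :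
    X.filter (fun i : Fin (2 * m + 1) => (i : ℕ) < 2 * m) ⊆
      univ.filter (fun i : Fin (2 * m + 1) => (i : ℕ) < 2 * m ∧ x.1 i = 1) := by
  intro i hi
  rw [mem_filter] at hi ⊢
  exact ⟨mem_univ i, hi.2, by simp [hx i hi.1, expv, hi.2]⟩

theorem expIsWeakPAXp_iff_card :
    ExpIsWeakPAXp m X ↔ m ≤ #(X.filter fun i : Fin (2 * m + 1) => (i : ℕ) < 2 * m) := by
  rw [expIsWeakPAXp_iff_forall]
  refine ⟨fun h => ?_, fun h x hx => ?_⟩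
  · simpa [expκ_expIndicator] using h _ (expIndicator_eq_expv X)
  · rw [expκ, decide_eq_true_iff]
    exact h.trans (card_le_card (filter_subset_of_eq_expv hx))

theorem expIsPAXp_of_card_eq (hX : ∀ i ∈ X, (i : ℕ) < 2 * m) (hcard : #X = m) :
    ExpIsPAXp m X := by
  refine ⟨?_, fun Y hY hYweak => ?_⟩
  · rw [expIsWeakPAXp_iff_card, filter_true_of_mem hX, hcard]
  · rw [expIsWeakPAXp_iff_card] at hYweak
    have := card_lt_card hY
    have := card_filter_le Y (fun i : Fin (2 * m + 1) => (i : ℕ) < 2 * m)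
    omega

end ExpExample

theorem expPAXp_count_ge_general (m : ℕ) :
    2 ^ m ≤ {X : Finset (Fin (2 * m + 1)) | ExpIsPAXp m X}.ncard := by
  set B := univ.filter (fun i : Fin (2 * m + 1) => (i : ℕ) < 2 * m)
  have hB : #B = 2 * m := by simp [B, Fin.card_filter_val_lt]
  have hsub : (powersetCard m B : Set (Finset (Fin (2 * m + 1)))) ⊆ {X | ExpIsPAXp m X} := by
    intro X hX
    rw [mem_coe, mem_powersetCard] at hX
    exact expIsPAXp_of_card_eq (fun i hi => (mem_filter.1 (hX.1 hi)).2) hX.2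
  calc 2 ^ m ≤ m.centralBinom := two_pow_le_centralBinom m
    _ = (powersetCard m B : Set (Finset (Fin (2 * m + 1)))).ncard := by
      rw [Set.ncard_coe_finset, card_powersetCard, hB, Nat.centralBinom_eq_two_mul_choose]
    _ ≤ _ := Set.ncard_le_ncard hsub (Set.toFinite _)

/-- in the exponential example, the number of PAXp's (for `δ = 1`,
class `true`, point `v`) is at least `2^m`, hence exponential in the number
`n = 2m+1` of features. -/
theorem expPAXp_count_ge (m : ℕ) (hm : 1 ≤ m) :
    2 ^ m ≤ {X : Finset (Fin (2 * m + 1)) | ExpIsPAXp m X}.ncard :=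
  expPAXp_count_ge_general m
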